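/- Let A be a primitive axial algebra of Jordan type η over a field F with char F ≠ 2, generated by a closed set 𝒜 of η-axes with |𝒜| > 1 such that the graph Δ_𝒜 is connected. Let D = {τ_a | a ∈ 𝒜} and G = ⟨D⟩ ≤ Aut(A). Assume the map a ↦ τ_a on 𝒜 is injective and that D is a set of 3-transpositions in G. Then the F-linear map from the Matsuo algebra M_{η/2}(G,D) to A sending the basis element τ_a to a (for each a ∈ 𝒜) is a surjective F-algebra homomorphism; in particular A is a quotient of M_{η/2}(G,D). -/

import Mathlib

universe u v

section Prelim

variable (F : Type u) {A : Type v} [Field F] [NonUnitalNonAssocCommRing A]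
  [Module F A] [SMulCommClass F A A] [IsScalarTower F A A]

/-- The λ-eigenspace of the adjoint map `ad_a : x ↦ a * x`. -/
def eigSp (a : A) (l : F) : Submodule F A where
  carrier := {x | a * x = l • x}
  add_mem' := by
    intro x y hx hy
    simp only [Set.mem_setOf_eq] at *
    rw [mul_add, hx, hy, smul_add]
  zero_mem' := by simp
  smul_mem' := by
    intro c x hx
    simp only [Set.mem_setOf_eq] at *
    rw [mul_smul_comm, hx, smul_smul, smul_smul, mul_comm]

/-- `a` is a (primitive) `η`-axis. -/
structure IsAxis (η : F) (a : A) : Prop where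
  ne_zero : a ≠ 0
  idem : a * a = a
  decomp : eigSp F a 1 ⊔ eigSp F a 0 ⊔ eigSp F a η = ⊤
  prim : eigSp F a 1 = Submodule.span F {a}
  f11 : ∀ x ∈ eigSp F a 1, ∀ y ∈ eigSp F a 1, x * y ∈ eigSp F a 1
  f00 : ∀ x ∈ eigSp F a 0, ∀ y ∈ eigSp F a 0, x * y ∈ eigSp F a 0
  f10 : ∀ x ∈ eigSp F a 1, ∀ y ∈ eigSp F a 0, x * y = 0
  fpe : ∀ x ∈ eigSp F a 1 ⊔ eigSp F a 0, ∀ y ∈ eigSp F a η, x * y ∈ eigSp F a η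
  fee : ∀ x ∈ eigSp F a η, ∀ y ∈ eigSp F a η, x * y ∈ eigSp F a 1 ⊔ eigSp F a 0

/-- `τ` is the Miyamoto involution of the `η`-axis `a`. -/
structure IsMiyamoto (η : F) (a : A) (τ : A → A) : Prop where
  fixes : ∀ x ∈ eigSp F a 1 ⊔ eigSp F a 0, τ x = x
  negates : ∀ x ∈ eigSp F a η, τ x = -x
  map_add : ∀ x y : A, τ (x + y) = τ x + τ y
  map_smul : ∀ (c : F) (x : A), τ (c • x) = c • τ x
  map_mul : ∀ x y : A, τ (x * y) = τ x * τ y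
  bijective : Function.Bijective τ

/-- `c = φ_a(u)`, the projection of `u` to `F·a` w.r.t. the axis `a`. -/
def IsProjCoeff (η : F) (a u : A) (c : F) : Prop :=
  ∃ u0 ∈ eigSp F a 0, ∃ ue ∈ eigSp F a η, u = c • a + u0 + ue

/-- `e` is an identity element of the subalgebra `N`. -/
def IsIdentOf (N : NonUnitalSubalgebra F A) (e : A) : Prop :=
  e ∈ N ∧ ∀ z ∈ N, e * z = z

/-- `ψ` is an `F`-algebra automorphism of `A`. -/
structure IsAlgAut (ψ : A → A) : Prop where
  map_add : ∀ x y : A, ψ (x + y) = ψ x + ψ y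
  map_smul : ∀ (c : F) (x : A), ψ (c • x) = c • ψ x
  map_mul : ∀ x y : A, ψ (x * y) = ψ x * ψ y
  bijective : Function.Bijective ψ

/-- The graph `Δ_𝒜`: distinct axes are adjacent iff their product is nonzero. -/
def axesGraph (𝒜 : Set A) : SimpleGraph 𝒜 where
  Adj x y := x ≠ y ∧ (x : A) * (y : A) ≠ 0
  symm := by
    constructor
    rintro x y ⟨hxy, hm⟩
    exact ⟨hxy.symm, by rwa [mul_comm]⟩
  loopless := by constructor; rintro x ⟨h, -⟩; exact h rfl

/-- Multiplication of the Jordan algebra of Clifford type `J(V,B) = F·e ⊕ V`. -/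
def cliffMul {V : Type*} [AddCommGroup V] [Module F V]
    (B : V →ₗ[F] V →ₗ[F] F) (x y : F × V) : F × V :=
  (x.1 * y.1 + B x.2 y.2, x.1 • y.2 + y.1 • x.2)

end Prelim

/-- An isomorphism of `A` with a Jordan algebra of Clifford type `J(V,B)`. -/
structure CliffordTypeIso (F : Type u) (A : Type v) [Field F]
    [NonUnitalNonAssocCommRing A] [Module F A] [SMulCommClass F A A]
    [IsScalarTower F A A] where
  V : Type v
  [instAdd : AddCommGroup V]
  [instMod : Module F V]
  B : V →ₗ[F] V →ₗ[F] F
  symm : ∀ v w : V, B v w = B w v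
  iso : A ≃ₗ[F] F × V
  mul_compat : ∀ x y : A, iso (x * y) = cliffMul F B (iso x) (iso y)

/-!
Split `u = φ a + u₀ + u_η` along the eigenspaces of an `η`-axis `a`. Then `a u = φ a + η u_η` and
`u - u^{τ_a} = 2 u_η`, so `a u = φ a + (η/2)(u - u^{τ_a})`. Hence the span of a closed set of axes
is closed under multiplication, so it is all of `A`. Comparing this formula for `ab` with the one
for `ba`, linear independence of the distinct idempotents `a, b` forces `ab = 0` when `a^{τ_b} = a`
and `b^{τ_a} = b`, and `ab = (η/2)(a + b - a^{τ_b})` when `b^{τ_a} = a^{τ_b}`. By uniqueness of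
Miyamoto involutions `τ_{a^{τ_b}} = τ_b τ_a τ_b`, so by injectivity of `a ↦ τ_a` these two
situations are exactly `|τ_a τ_b| = 2` and `|τ_a τ_b| = 3`.
-/

section Group

variable {G : Type*} [Group G] {s t : G}

theorem mul_comm_of_orderOf_mul_eq_two (hs : s * s = 1) (ht : t * t = 1)
    (h : orderOf (s * t) = 2) : s * t = t * s := by
  have hst : s * t * (s * t) = 1 := by rw [← pow_two, ← h, pow_orderOf_eq_one]
  rw [eq_inv_of_mul_eq_one_left hst, mul_inv_rev, inv_eq_of_mul_eq_one_right hs,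
    inv_eq_of_mul_eq_one_right ht]

theorem mul_mul_eq_of_orderOf_mul_eq_three (hs : s * s = 1) (ht : t * t = 1)
    (h : orderOf (s * t) = 3) : s * t * s = t * s * t := by
  have hst : s * t * s * (t * s * t) = 1 := by
    rw [← pow_orderOf_eq_one (s * t), h]
    simp only [pow_succ, pow_zero, one_mul, mul_assoc]
  rw [eq_inv_of_mul_eq_one_left hst]
  simp only [mul_inv_rev, inv_eq_of_mul_eq_one_right hs, inv_eq_of_mul_eq_one_right ht, mul_assoc]

theorem orderOf_mul_eq_three (ht : t * t = 1) (hst : s ≠ t)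
    (h : orderOf (s * t) ∈ ({1, 2, 3} : Set ℕ)) (h2 : orderOf (s * t) ≠ 2) :
    orderOf (s * t) = 3 := by
  rcases h with h1 | h2' | h3
  · exact absurd (mul_right_cancel ((orderOf_eq_one_iff.1 h1).trans ht.symm)) hst
  · exact absurd h2' h2
  · exact h3

end Group

section AxialAlgebra

variable {F : Type u} {A : Type v} [Field F] [NonUnitalNonAssocCommRing A] [Module F A]

namespace IsAlgAut

variable {ψ : A → A}

def toLinearMap (h : IsAlgAut F ψ) : A →ₗ[F] A := ⟨⟨ψ, h.map_add⟩, h.map_smul⟩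

theorem comp {χ : A → A} (hψ : IsAlgAut F ψ) (hχ : IsAlgAut F χ) : IsAlgAut F (ψ ∘ χ) where
  map_add x y := by simp only [Function.comp_apply, hχ.map_add, hψ.map_add]
  map_smul c x := by simp only [Function.comp_apply, hχ.map_smul, hψ.map_smul]
  map_mul x y := by simp only [Function.comp_apply, hχ.map_mul, hψ.map_mul]
  bijective := hψ.bijective.comp hχ.bijective

theorem symm {ψ : Equiv.Perm A} (h : IsAlgAut F ψ) : IsAlgAut F ψ.symm where
  map_add x y := ψ.injective (by simp [h.map_add])
  map_smul c x := ψ.injective (by simp [h.map_smul])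
  map_mul x y := ψ.injective (by simp [h.map_mul])
  bijective := ψ.symm.bijective

end IsAlgAut

variable [SMulCommClass F A A]

theorem mem_eigSp {a x : A} {l : F} : x ∈ eigSp F a l ↔ a * x = l • x := Iff.rfl

theorem IsAlgAut.apply_mem_eigSp_iff {ψ : A → A} (h : IsAlgAut F ψ) {b x : A} {l : F} :
    ψ x ∈ eigSp F (ψ b) l ↔ x ∈ eigSp F b l := by
  simp only [mem_eigSp, ← h.map_mul, ← h.map_smul, h.bijective.injective.eq_iff]

theorem IsAlgAut.eigSp_apply {ψ : A → A} (h : IsAlgAut F ψ) (b : A) (l : F) :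
    eigSp F (ψ b) l = (eigSp F b l).map h.toLinearMap := by
  ext x
  obtain ⟨y, rfl⟩ := h.bijective.surjective x
  rw [h.apply_mem_eigSp_iff]
  exact h.bijective.injective.mem_set_image.symm

namespace IsMiyamoto

variable {η : F} {a : A} {τ : A → A}

theorem isAlgAut (h : IsMiyamoto F η a τ) : IsAlgAut F τ :=
  ⟨h.map_add, h.map_smul, h.map_mul, h.bijective⟩

theorem unique (h : IsMiyamoto F η a τ) (hdec : eigSp F a 1 ⊔ eigSp F a 0 ⊔ eigSp F a η = ⊤)
    {τ' : A → A} (h' : IsMiyamoto F η a τ') : τ = τ' := by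
  funext u
  obtain ⟨x, hx, y, hy, rfl⟩ := Submodule.mem_sup.1 (hdec ▸ Submodule.mem_top : u ∈ _)
  rw [h.map_add, h'.map_add, h.fixes x hx, h'.fixes x hx, h.negates y hy, h'.negates y hy]

theorem involutive (h : IsMiyamoto F η a τ)
    (hdec : eigSp F a 1 ⊔ eigSp F a 0 ⊔ eigSp F a η = ⊤) : Function.Involutive τ := by
  intro u
  obtain ⟨x, hx, y, hy, rfl⟩ := Submodule.mem_sup.1 (hdec ▸ Submodule.mem_top : u ∈ _)
  rw [h.map_add, h.fixes x hx, h.negates y hy, h.map_add, h.fixes x hx,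
    h.negates _ (neg_mem hy), neg_neg]

theorem conj {ψ : Equiv.Perm A} (hψ : IsAlgAut F ψ) (h : IsMiyamoto F η a τ) :
    IsMiyamoto F η (ψ a) (ψ ∘ τ ∘ ψ.symm) := by
  have hcomp := hψ.comp (h.isAlgAut.comp hψ.symm)
  refine ⟨fun x hx => ?_, fun x hx => ?_, hcomp.map_add, hcomp.map_smul, hcomp.map_mul,
    hcomp.bijective⟩
  · rw [hψ.eigSp_apply, hψ.eigSp_apply, ← Submodule.map_sup] at hx
    obtain ⟨y, hy, rfl⟩ := hx
    simp [IsAlgAut.toLinearMap, h.fixes y hy]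
  · rw [hψ.eigSp_apply] at hx
    obtain ⟨y, hy, rfl⟩ := hx
    simpa [IsAlgAut.toLinearMap, h.negates y hy] using hψ.toLinearMap.map_neg y

theorem mul_self_eq_one {σ : Equiv.Perm A} (h : IsMiyamoto F η a σ) (ha : IsAxis F η a) :
    σ * σ = 1 :=
  Equiv.ext (h.involutive ha.decomp)

theorem eq_mul_mul {b : A} {σa σb σc : Equiv.Perm A} (ha : IsAxis F η a)
    (hσa : IsMiyamoto F η a σa) (hσb : IsMiyamoto F η b σb) (hc : IsAxis F η (σa b))
    (hσc : IsMiyamoto F η (σa b) σc) : σc = σa * σb * σa := by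
  have hσc_eq : σc = σa * σb * σa⁻¹ :=
    DFunLike.coe_injective (hσc.unique hc.decomp (hσb.conj hσa.isAlgAut))
  rwa [inv_eq_of_mul_eq_one_right (hσa.mul_self_eq_one ha)] at hσc_eq

end IsMiyamoto

namespace IsAxis

variable {η : F} {a : A} {τa : A → A}

theorem mul_eq_smul_add (hchar : (2 : F) ≠ 0) (ha : IsAxis F η a) (hτ : IsMiyamoto F η a τa)
    (u : A) : ∃ φ : F, a * u = φ • a + (η / 2) • (u - τa u) := by
  obtain ⟨x, hx, ue, hue, rfl⟩ := Submodule.mem_sup.1 (ha.decomp ▸ Submodule.mem_top : u ∈ _)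
  obtain ⟨x1, hx1, x0, hx0, rfl⟩ := Submodule.mem_sup.1 hx
  obtain ⟨φ, rfl⟩ := Submodule.mem_span_singleton.1 (ha.prim ▸ hx1)
  refine ⟨φ, ?_⟩
  have h1 : a * (φ • a) = φ • a := by rw [mul_smul_comm, ha.idem]
  have h0 : a * x0 = 0 := by rw [mem_eigSp.1 hx0, zero_smul]
  have hτu : τa (φ • a + x0 + ue) = φ • a + x0 - ue := by
    rw [hτ.map_add, hτ.fixes _ hx, hτ.negates _ hue, sub_eq_add_neg]
  rw [mul_add, mul_add, h1, h0, add_zero, mem_eigSp.1 hue, hτu,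
    show φ • a + x0 + ue - (φ • a + x0 - ue) = (2 : F) • ue by rw [two_smul]; abel,
    smul_smul, div_mul_cancel₀ η hchar]

theorem mul_mem_of_mem (hchar : (2 : F) ≠ 0) (ha : IsAxis F η a) (hτ : IsMiyamoto F η a τa)
    {S : Submodule F A} {u : A} (haS : a ∈ S) (huS : u ∈ S) (hτu : τa u ∈ S) : a * u ∈ S := by
  obtain ⟨φ, hφ⟩ := ha.mul_eq_smul_add hchar hτ u
  rw [hφ]
  exact add_mem (S.smul_mem _ haS) (S.smul_mem _ (sub_mem huS hτu))

end IsAxis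

variable [IsScalarTower F A A]

theorem linearIndependent_pair_of_isIdempotentElem {a b : A} (ha : IsIdempotentElem a)
    (hb : IsIdempotentElem b) (ha0 : a ≠ 0) (hb0 : b ≠ 0) (hab : a ≠ b) :
    LinearIndependent F ![a, b] := by
  refine (LinearIndependent.pair_iff' ha0).2 fun γ hγ => ?_
  rw [← hγ] at hb
  have hsq : (γ * γ) • a = γ • a := by rw [← hb.eq, smul_mul_smul_comm, ha.eq]
  have hγ1 : γ * (γ - 1) = 0 := by
    have h0 : (γ * γ - γ) • a = 0 := by rw [sub_smul, hsq, sub_self]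
    linear_combination (smul_eq_zero.1 h0).resolve_right ha0
  rcases mul_eq_zero.1 hγ1 with h | h
  · exact hb0 (by rw [← hγ, h, zero_smul])
  · exact hab (by rw [← hγ, sub_eq_zero.1 h, one_smul])

theorem span_eq_top_of_adjoin_eq_top {s : Set A} (hs : NonUnitalAlgebra.adjoin F s = ⊤)
    (hmul : ∀ a ∈ s, ∀ b ∈ s, a * b ∈ Submodule.span F s) : Submodule.span F s = ⊤ := by
  have hspan_mul : Submodule.map₂ (LinearMap.mul F A) (.span F s) (.span F s) ≤ .span F s := by
    rw [Submodule.map₂_span_span, Submodule.span_le]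
    rintro _ ⟨a, ha, b, hb, rfl⟩
    exact hmul a ha b hb
  let S := (Submodule.span F s).toNonUnitalSubalgebra fun x y hx hy =>
    hspan_mul (Submodule.apply_mem_map₂ _ hx hy)
  have hle : NonUnitalAlgebra.adjoin F s ≤ S := NonUnitalAlgebra.adjoin_le Submodule.subset_span
  exact eq_top_iff.2 fun x _ => hle (hs ▸ NonUnitalAlgebra.mem_top)

namespace IsAxis

variable {η : F} {a b : A} {τa τb : A → A}

theorem linearIndependent_pair (ha : IsAxis F η a) (hb : IsAxis F η b) (hab : a ≠ b) :
    LinearIndependent F ![a, b] :=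
  linearIndependent_pair_of_isIdempotentElem ha.idem hb.idem ha.ne_zero hb.ne_zero hab

theorem mul_eq_zero_of_apply_eq (hchar : (2 : F) ≠ 0) (ha : IsAxis F η a) (hb : IsAxis F η b)
    (hab : a ≠ b) (hτa : IsMiyamoto F η a τa) (hτb : IsMiyamoto F η b τb) (hτab : τa b = b)
    (hτba : τb a = a) : a * b = 0 := by
  obtain ⟨φ, hφ⟩ := ha.mul_eq_smul_add hchar hτa b
  obtain ⟨ψ, hψ⟩ := hb.mul_eq_smul_add hchar hτb a
  rw [hτab, sub_self, smul_zero, add_zero] at hφ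
  rw [hτba, sub_self, smul_zero, add_zero, mul_comm, hφ] at hψ
  have hφ0 := (LinearIndependent.pair_iff.1 (ha.linearIndependent_pair hb hab) φ (-ψ)
    (by rw [hψ, neg_smul, add_neg_cancel])).1
  rw [hφ, hφ0, zero_smul]

theorem mul_eq_of_apply_eq_apply (hchar : (2 : F) ≠ 0) (ha : IsAxis F η a) (hb : IsAxis F η b)
    (hab : a ≠ b) (hτa : IsMiyamoto F η a τa) (hτb : IsMiyamoto F η b τb) (hτ : τa b = τb a) :
    a * b = (η / 2) • (a + b - τb a) := by
  obtain ⟨φ, hφ⟩ := ha.mul_eq_smul_add hchar hτa b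
  obtain ⟨ψ, hψ⟩ := hb.mul_eq_smul_add hchar hτb a
  rw [mul_comm, ← hτ] at hψ
  have hφη := (LinearIndependent.pair_iff.1 (ha.linearIndependent_pair hb hab) (φ - η / 2)
    (η / 2 - ψ) (by linear_combination (norm := module) hψ - hφ)).1
  rw [hφ, sub_eq_zero.1 hφη, hτ]
  module

end IsAxis

end AxialAlgebra

/-- Via the bijection `a ↦ τ_a`, the Matsuo algebra `M_{η/2}(G, D)` is realized on `𝒜 →₀ F`. -/
theorem quotient_of_matsuo_algebra_general
    {F : Type u} {A : Type v} [Field F] [NonUnitalNonAssocCommRing A]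
    [Module F A] [SMulCommClass F A A] [IsScalarTower F A A] [DecidableEq A]
    (hchar : (2 : F) ≠ 0) (η : F)
    (𝒜 : Set A) (h𝒜 : ∀ a ∈ 𝒜, IsAxis F η a)
    (hgen : NonUnitalAlgebra.adjoin F 𝒜 = ⊤)
    (τp : A → Equiv.Perm A) (hτ : ∀ a ∈ 𝒜, IsMiyamoto F η a ⇑(τp a))
    (hclosed : ∀ a ∈ 𝒜, ∀ b ∈ 𝒜, τp b a ∈ 𝒜)
    (hinj : Set.InjOn τp 𝒜)
    (h3trans : ∀ s ∈ τp '' 𝒜, ∀ t ∈ τp '' 𝒜, orderOf (s * t) ∈ ({1, 2, 3} : Set ℕ))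
    (conj : 𝒜 → 𝒜 → 𝒜) (hconj : ∀ a b : 𝒜, (conj a b : A) = τp (b : A) (a : A)) :
    Function.Surjective (Finsupp.linearCombination F (fun a : 𝒜 => (a : A))) ∧
    ∀ a b : 𝒜,
      Finsupp.linearCombination F (fun a : 𝒜 => (a : A))
        (if a = b then Finsupp.single a (1 : F)
         else if orderOf (τp (a : A) * τp (b : A)) = 2 then 0
         else (η / 2) • (Finsupp.single a (1 : F) + Finsupp.single b (1 : F)
                - Finsupp.single (conj a b) (1 : F)))
      = (a : A) * (b : A) := by
  have haxis : ∀ a : 𝒜, IsAxis F η (a : A) := fun a => h𝒜 a a.2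
  have hmiy : ∀ a : 𝒜, IsMiyamoto F η (a : A) (τp a) := fun a => hτ a a.2
  have hsq : ∀ a : 𝒜, τp (a : A) * τp (a : A) = 1 := fun a => (hmiy a).mul_self_eq_one (haxis a)
  have hτ_apply : ∀ a b : 𝒜, τp (τp (a : A) (b : A)) = τp (a : A) * τp (b : A) * τp (a : A) :=
    fun a b => (hmiy a).eq_mul_mul (haxis a) (hmiy b) (h𝒜 _ (hclosed b b.2 a a.2))
      (hτ _ (hclosed b b.2 a a.2))
  refine ⟨?_, fun a b => ?_⟩
  · rw [← LinearMap.range_eq_top, Finsupp.range_linearCombination, Subtype.range_coe]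
    exact span_eq_top_of_adjoin_eq_top hgen fun a ha b hb => (h𝒜 a ha).mul_mem_of_mem hchar
      (hτ a ha) (Submodule.subset_span ha) (Submodule.subset_span hb)
      (Submodule.subset_span (hclosed b hb a ha))
  split_ifs with hab h2
  · subst hab
    rw [Finsupp.linearCombination_single, one_smul, (haxis a).idem]
  · have hcomm := mul_comm_of_orderOf_mul_eq_two (hsq a) (hsq b) h2
    rw [map_zero, eq_comm]
    refine (haxis a).mul_eq_zero_of_apply_eq hchar (haxis b) (Subtype.coe_ne_coe.2 hab) (hmiy a)
      (hmiy b) (hinj (hclosed b b.2 a a.2) b.2 ?_) (hinj (hclosed a a.2 b b.2) a.2 ?_)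
    · rw [hτ_apply, hcomm, mul_assoc, hsq, mul_one]
    · rw [hτ_apply, ← hcomm, mul_assoc, hsq, mul_one]
  · have h3 := orderOf_mul_eq_three (hsq b) (fun h => hab (Subtype.ext (hinj a.2 b.2 h)))
      (h3trans _ ⟨a, a.2, rfl⟩ _ ⟨b, b.2, rfl⟩) h2
    have hswap : τp (a : A) (b : A) = τp (b : A) (a : A) :=
      hinj (hclosed b b.2 a a.2) (hclosed a a.2 b b.2) (by
        rw [hτ_apply, hτ_apply, mul_mul_eq_of_orderOf_mul_eq_three (hsq a) (hsq b) h3])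
    simp only [map_smul, map_sub, map_add, Finsupp.linearCombination_single, one_smul, hconj]
    exact ((haxis a).mul_eq_of_apply_eq_apply hchar (haxis b) (Subtype.coe_ne_coe.2 hab)
      (hmiy a) (hmiy b) hswap).symm

/-- Let `A` be generated by a closed set `𝒜` of `η`-axes
(`|𝒜| > 1`, `Δ_𝒜` connected), let `D = {τ_a | a ∈ 𝒜}` and `G = ⟨D⟩`.  If
`a ↦ τ_a` is injective on `𝒜` and `D` is a set of 3-transpositions in `G`,
then the linear map from the Matsuo algebra `M_{η/2}(G, D)` to `A` sending the
basis element `τ_a` to `a` is a surjective algebra homomorphism; in particular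
`A` is a quotient of `M_{η/2}(G, D)`.  (Via the bijection `a ↦ τ_a`, the Matsuo
algebra is realized on the free module `𝒜 →₀ F`, with the Matsuo product of
basis vectors given case-by-case: `x·x = x`; `x·y = 0` if `|τ_x τ_y| = 2`; and
`x·y = (η/2)(x + y − x^{τ_y})` if `|τ_x τ_y| = 3`.) -/
theorem quotient_of_matsuo_algebra
    {F : Type u} {A : Type v} [Field F] [NonUnitalNonAssocCommRing A]
    [Module F A] [SMulCommClass F A A] [IsScalarTower F A A] [DecidableEq A]
    (hchar : (2 : F) ≠ 0) (η : F) (hη0 : η ≠ 0) (hη1 : η ≠ 1)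
    (𝒜 : Set A) (h𝒜 : ∀ a ∈ 𝒜, IsAxis F η a)
    (hgen : NonUnitalAlgebra.adjoin F 𝒜 = ⊤)
    (hcard : 𝒜.Nontrivial)
    (hconn : (axesGraph 𝒜).Connected)
    (τp : A → Equiv.Perm A) (hτ : ∀ a ∈ 𝒜, IsMiyamoto F η a ⇑(τp a))
    (hclosed : ∀ a ∈ 𝒜, ∀ b ∈ 𝒜, τp b a ∈ 𝒜)
    (hinj : Set.InjOn τp 𝒜)
    (hinvol : ∀ d ∈ τp '' 𝒜, orderOf d = 2)
    (hnormal : ∀ g ∈ Subgroup.closure (τp '' 𝒜), ∀ d ∈ τp '' 𝒜,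
      g * d * g⁻¹ ∈ τp '' 𝒜)
    (h3trans : ∀ s ∈ τp '' 𝒜, ∀ t ∈ τp '' 𝒜, orderOf (s * t) ∈ ({1, 2, 3} : Set ℕ))
    (conj : 𝒜 → 𝒜 → 𝒜) (hconj : ∀ a b : 𝒜, (conj a b : A) = τp (b : A) (a : A)) :
    Function.Surjective (Finsupp.linearCombination F (fun a : 𝒜 => (a : A))) ∧
    ∀ a b : 𝒜,
      Finsupp.linearCombination F (fun a : 𝒜 => (a : A))
        (if a = b then Finsupp.single a (1 : F)
         else if orderOf (τp (a : A) * τp (b : A)) = 2 then 0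
         else (η / 2) • (Finsupp.single a (1 : F) + Finsupp.single b (1 : F)
                - Finsupp.single (conj a b) (1 : F)))
      = (a : A) * (b : A) :=
  quotient_of_matsuo_algebra_general hchar η 𝒜 h𝒜 hgen τp hτ hclosed hinj h3trans conj hconj
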